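/- For k ∈ ℕ with k ≥ 1 write k = 2^{a₁} + ⋯ + 2^{a_{#k}} with a₁ > ⋯ > a_{#k} ≥ 0, where #k is the number of ones in the binary expansion of k. Then: ∫₀¹ x · wal_k(x) dx equals 1/2 if k = 0, −2^{−a₁−2} if #k = 1, and 0 if #k ≥ 2; ∫₀¹ x² · wal_k(x) dx equals 1/3 if k = 0, −2^{−a₁−2} if #k = 1, 2^{−a₁−a₂−3} if #k = 2, and 0 if #k ≥ 3; and ∫₀¹ x³ · wal_k(x) dx equals 1/4 if k = 0, −2^{−a₁−2} + 2^{−3a₁−5} if #k = 1, 3 · 2^{−a₁−a₂−4} if #k = 2, −3 · 2^{−a₁−a₂−a₃−5} if #k = 3, and 0 if #k ≥ 4. -/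

import Mathlib

/-!
On `[0, 1/2)` one has `wal_k x = wal_{k/2} (2x)` and on `[1/2, 1)` one has
`wal_k x = (-1)^(k % 2) wal_{k/2} (2x - 1)`. Substituting in `∫₀¹ x^m wal_k x dx` and expanding
`((y + 1)/2)^m` binomially expresses the `m`-th moment of `wal_k` through the moments of order
`≤ m` of `wal_{k/2}`. Passing from `k` to `k/2` drops the smallest exponent (which is `0`) when
`k` is odd and lowers every exponent by one otherwise, so strong induction on `k` reduces the
theorem to checking that the closed forms obey the same recursion: a polynomial identity in the
numbers `2^(-a_i)`.
-/

noncomputable def binDigit (ℓ : ℕ) (x : ℝ) : ℕ := (⌊(2 : ℝ) ^ ℓ * x⌋).toNat % 2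

noncomputable def walsh (k : ℕ) (x : ℝ) : ℝ :=
  (-1 : ℝ) ^ (∑ ℓ ∈ Finset.range (k + 1), (k / 2 ^ ℓ % 2) * binDigit (ℓ + 1) x)

open MeasureTheory Set

lemma binDigit_fract_two_mul {ℓ : ℕ} (hℓ : 1 ≤ ℓ) {x : ℝ} (hx : 0 ≤ x) :
    binDigit ℓ (Int.fract (2 * x)) = binDigit (ℓ + 1) x := by
  obtain ⟨n, rfl⟩ : ∃ n, ℓ = n + 1 := ⟨ℓ - 1, by omega⟩
  have hfloor : ⌊(2 : ℝ) ^ (n + 1) * Int.fract (2 * x)⌋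
      = ⌊(2 : ℝ) ^ (n + 1 + 1) * x⌋ - 2 * (2 ^ n * ⌊2 * x⌋) := by
    rw [← Int.floor_sub_intCast]
    congr 1
    rw [Int.fract]
    push_cast
    ring
  have hlow : 0 ≤ ⌊(2 : ℝ) ^ (n + 1) * Int.fract (2 * x)⌋ :=
    Int.floor_nonneg.2 (mul_nonneg (by positivity) (Int.fract_nonneg _))
  have hhigh : 0 ≤ ⌊(2 : ℝ) ^ (n + 1 + 1) * x⌋ := Int.floor_nonneg.2 (by positivity)
  unfold binDigit
  rw [hfloor] at hlow ⊢
  omega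

lemma walsh_eq_of_lt {k N : ℕ} (hN : k < N) (x : ℝ) :
    walsh k x =
      (-1 : ℝ) ^ (∑ ℓ ∈ Finset.range N, (k / 2 ^ ℓ % 2) * binDigit (ℓ + 1) x) := by
  unfold walsh
  congr 1
  refine Finset.sum_subset (Finset.range_subset_range.2 hN) fun ℓ _ hℓ => ?_
  have : k < 2 ^ ℓ :=
    Nat.lt_two_pow_self.trans_le (Nat.pow_le_pow_right two_pos (by simp at hℓ; omega))
  simp [Nat.div_eq_of_lt this]

lemma walsh_eq_mul_walsh_fract (k : ℕ) {x : ℝ} (hx : 0 ≤ x) :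
    walsh k x = (-1 : ℝ) ^ (k % 2 * binDigit 1 x) * walsh (k / 2) (Int.fract (2 * x)) := by
  rw [walsh_eq_of_lt (N := k + 2) (by omega), walsh_eq_of_lt (N := k + 1) (by omega),
    Finset.sum_range_succ', ← pow_add, add_comm]
  congr 2
  · simp
  · refine Finset.sum_congr rfl fun ℓ _ => ?_
    rw [Nat.div_div_eq_div_mul, ← pow_succ', binDigit_fract_two_mul (by omega) hx]

lemma walsh_of_lt_half (k : ℕ) {x : ℝ} (hx : x ∈ Ico 0 (1 / 2)) :
    walsh k x = walsh (k / 2) (2 * x) := by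
  have hfloor : ⌊2 * x⌋ = 0 :=
    Int.floor_eq_zero_iff.2 ⟨by linarith [hx.1], by linarith [hx.2]⟩
  have hfract : Int.fract (2 * x) = 2 * x := by rw [Int.fract, hfloor, Int.cast_zero, sub_zero]
  have hdigit : binDigit 1 x = 0 := by simp [binDigit, hfloor]
  rw [walsh_eq_mul_walsh_fract k hx.1, hfract, hdigit, mul_zero, pow_zero, one_mul]

lemma walsh_of_half_le (k : ℕ) {x : ℝ} (hx : x ∈ Ico (1 / 2) 1) :
    walsh k x = (-1) ^ (k % 2) * walsh (k / 2) (2 * x - 1) := by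
  have hfloor : ⌊2 * x⌋ = 1 :=
    Int.floor_eq_iff.2 ⟨by push_cast; linarith [hx.1], by push_cast; linarith [hx.2]⟩
  have hfract : Int.fract (2 * x) = 2 * x - 1 := by rw [Int.fract, hfloor, Int.cast_one]
  have hdigit : binDigit 1 x = 1 := by simp [binDigit, hfloor]
  rw [walsh_eq_mul_walsh_fract k (by linarith [hx.1]), hfract, hdigit, mul_one]

lemma measurable_binDigit (ℓ : ℕ) : Measurable (binDigit ℓ) :=
  (measurable_from_top (f := fun n : ℤ => n.toNat % 2)).comp
    (Int.measurable_floor.comp (measurable_const_mul _))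

lemma measurable_walsh (k : ℕ) : Measurable (walsh k) :=
  measurable_from_top.comp <|
    Finset.measurable_sum _ fun ℓ _ => (measurable_binDigit (ℓ + 1)).const_mul _

lemma norm_walsh (k : ℕ) (x : ℝ) : ‖walsh k x‖ = 1 := by
  simp [walsh]

lemma intervalIntegrable_mul_walsh {f : ℝ → ℝ} (hf : Continuous f) (k : ℕ) (a b : ℝ) :
    IntervalIntegrable (fun x => f x * walsh k x) volume a b :=
  (intervalIntegrable_const (c := (1 : ℝ))).mono_fun (measurable_walsh k).aestronglyMeasurable
      (.of_forall fun x => (norm_walsh k x).trans norm_one.symm |>.le)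
    |>.continuousOn_mul hf.continuousOn

lemma integral_mul_walsh_eq_halves {f : ℝ → ℝ} (hf : Continuous f) (k : ℕ) :
    ∫ x in (0 : ℝ)..1, f x * walsh k x =
      2⁻¹ * ((∫ y in (0 : ℝ)..1, f (y / 2) * walsh (k / 2) y) +
        (-1) ^ (k % 2) * ∫ y in (0 : ℝ)..1, f ((y + 1) / 2) * walsh (k / 2) y) := by
  have hleft : ∫ x in (0 : ℝ)..2⁻¹, f x * walsh k x
      = ∫ x in (0 : ℝ)..2⁻¹, (fun y => f (y / 2) * walsh (k / 2) y) (2 * x) := by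
    refine intervalIntegral.integral_congr_Ioo_of_le (by norm_num) fun x hx => ?_
    dsimp only
    rw [walsh_of_lt_half k ⟨hx.1.le, by linarith [hx.2]⟩, mul_div_cancel_left₀ x two_ne_zero]
  have hright : ∫ x in (2⁻¹ : ℝ)..1, f x * walsh k x
      = (-1) ^ (k % 2) * ∫ x in (2⁻¹ : ℝ)..1,
          (fun y => f ((y + 1) / 2) * walsh (k / 2) y) (2 * x - 1) := by
    rw [← intervalIntegral.integral_const_mul]
    refine intervalIntegral.integral_congr_Ioo_of_le (by norm_num) fun x hx => ?_
    dsimp only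
    rw [walsh_of_half_le k ⟨by linarith [hx.1], hx.2⟩, show (2 * x - 1 + 1) / 2 = x by ring]
    ring
  rw [← intervalIntegral.integral_add_adjacent_intervals (b := 2⁻¹)
      (intervalIntegrable_mul_walsh hf k _ _) (intervalIntegrable_mul_walsh hf k _ _),
    hleft, hright,
    intervalIntegral.integral_comp_mul_left (fun y => f (y / 2) * walsh (k / 2) y) two_ne_zero,
    intervalIntegral.integral_comp_mul_sub (fun y => f ((y + 1) / 2) * walsh (k / 2) y) two_ne_zero]
  norm_num
  ring

noncomputable def walshMoment (m k : ℕ) : ℝ := ∫ x in (0 : ℝ)..1, x ^ m * walsh k x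

lemma walsh_zero (x : ℝ) : walsh 0 x = 1 := by simp [walsh]

lemma walshMoment_zero_right (m : ℕ) : walshMoment m 0 = 1 / (m + 1) := by
  simp [walshMoment, walsh_zero]

lemma walshMoment_rec (m k : ℕ) :
    walshMoment m k = (2 ^ (m + 1))⁻¹ * (walshMoment m (k / 2) + (-1) ^ (k % 2) *
      ∑ j ∈ Finset.range (m + 1), (m.choose j : ℝ) * walshMoment j (k / 2)) := by
  have hlow : ∫ y in (0 : ℝ)..1, (y / 2) ^ m * walsh (k / 2) y
      = (2 ^ m)⁻¹ * walshMoment m (k / 2) := by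
    rw [walshMoment, ← intervalIntegral.integral_const_mul]
    congr 1 with y
    rw [div_pow]
    ring
  have hhigh : ∫ y in (0 : ℝ)..1, ((y + 1) / 2) ^ m * walsh (k / 2) y
      = (2 ^ m)⁻¹ *
        ∑ j ∈ Finset.range (m + 1), (m.choose j : ℝ) * walshMoment j (k / 2) := by
    simp only [walshMoment, Finset.mul_sum, ← intervalIntegral.integral_const_mul]
    rw [← intervalIntegral.integral_finsetSum fun j _ =>
      ((intervalIntegrable_mul_walsh (continuous_pow j) _ _ _).const_mul _).const_mul _]
    congr 1 with y
    rw [div_pow, add_pow, Finset.sum_div, Finset.sum_mul]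
    refine Finset.sum_congr rfl fun j _ => ?_
    ring
  rw [walshMoment, integral_mul_walsh_eq_halves (continuous_pow m), hlow, hhigh]
  ring

/-- The closed form of `walshMoment m (∑ i < L, 2 ^ a i)` for `m ≤ 3`, written in terms of
`u i = 2 ^ (-a i)`; for `m ≥ 4` the fallback value `0` is junk. -/
noncomputable def walshMomentFormula : ℕ → ℕ → (ℕ → ℝ) → ℝ
  | 0, 0, _ => 1
  | 1, 0, _ => 1 / 2
  | 1, 1, u => -u 0 / 4
  | 2, 0, _ => 1 / 3
  | 2, 1, u => -u 0 / 4
  | 2, 2, u => u 0 * u 1 / 8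
  | 3, 0, _ => 1 / 4
  | 3, 1, u => -u 0 / 4 + u 0 ^ 3 / 32
  | 3, 2, u => 3 * u 0 * u 1 / 16
  | 3, 3, u => -3 * u 0 * u 1 * u 2 / 32
  | _, _, _ => 0

lemma walshMomentFormula_even {m : ℕ} (hm : m ≤ 3) (L : ℕ) {u v : ℕ → ℝ}
    (hv : ∀ i < L, v i = 2 * u i) :
    walshMomentFormula m L u = (2 ^ (m + 1))⁻¹ * (walshMomentFormula m L v +
      ∑ j ∈ Finset.range (m + 1), (m.choose j : ℝ) * walshMomentFormula j L v) := by
  interval_cases m <;> rcases L with _ | _ | _ | _ | L <;>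
    simp [walshMomentFormula, Finset.sum_range_succ, hv] <;> ring

lemma walshMomentFormula_odd {m : ℕ} (hm : m ≤ 3) (L : ℕ) {u v : ℕ → ℝ}
    (hv : ∀ i < L, v i = 2 * u i) (hu : u L = 1) :
    walshMomentFormula m (L + 1) u = (2 ^ (m + 1))⁻¹ * (walshMomentFormula m L v -
      ∑ j ∈ Finset.range (m + 1), (m.choose j : ℝ) * walshMomentFormula j L v) := by
  interval_cases m <;> rcases L with _ | _ | _ | _ | L <;>
    simp [walshMomentFormula, Finset.sum_range_succ, hv, hu] <;> ring

lemma walshMoment_rec_of_eq {m k : ℕ} {F : ℕ → ℝ}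
    (h : ∀ j ≤ m, walshMoment j (k / 2) = F j) :
    walshMoment m k = (2 ^ (m + 1))⁻¹ *
      (F m + (-1) ^ (k % 2) * ∑ j ∈ Finset.range (m + 1), (m.choose j : ℝ) * F j) := by
  rw [walshMoment_rec, h m le_rfl,
    Finset.sum_congr rfl fun j hj => by rw [h j (Nat.lt_succ_iff.1 (Finset.mem_range.1 hj))]]

lemma sum_range_two_pow_eq_two_mul {n : ℕ} {a : ℕ → ℕ} (ha : ∀ i < n, 1 ≤ a i) :
    ∑ i ∈ Finset.range n, 2 ^ a i = 2 * ∑ i ∈ Finset.range n, 2 ^ (a i - 1) := by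
  rw [Finset.mul_sum]
  refine Finset.sum_congr rfl fun i hi => ?_
  rw [← pow_succ', Nat.sub_add_cancel (ha i (Finset.mem_range.1 hi))]

lemma StrictAntiOn.tsub_one {s : Set ℕ} {a : ℕ → ℕ} (ha : StrictAntiOn a s)
    (hs : ∀ i ∈ s, 1 ≤ a i) :
    StrictAntiOn (fun i => a i - 1) s := fun i hi j hj hij => by
  have := ha hi hj hij
  have := hs j hj
  show a j - 1 < a i - 1
  omega

lemma inv_two_pow_sub_one {n : ℕ} (hn : 1 ≤ n) :
    ((2 : ℝ) ^ (n - 1))⁻¹ = 2 * ((2 : ℝ) ^ n)⁻¹ := by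
  rw [← Nat.sub_add_cancel hn, pow_succ, Nat.add_sub_cancel, mul_inv]
  ring

lemma walshMoment_eq_formula {m : ℕ} (hm : m ≤ 3) (k : ℕ) {L : ℕ} {a : ℕ → ℕ}
    (ha : StrictAntiOn a (Iio L)) (hk : k = ∑ i ∈ Finset.range L, 2 ^ a i) :
    walshMoment m k = walshMomentFormula m L (fun i => ((2 : ℝ) ^ a i)⁻¹) := by
  induction k using Nat.strong_induction_on generalizing m L a with
  | _ k ih =>
  rcases L with _ | L
  · subst hk
    interval_cases m <;> norm_num [walshMoment_zero_right, walshMomentFormula]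
  have hk0 : 0 < k := hk ▸ Finset.sum_pos (fun i _ => by positivity) (by simp)
  have hpos : ∀ i < L, 1 ≤ a i := fun i hi => by
    have := ha (hi.trans L.lt_succ_self) L.lt_succ_self hi
    omega
  rcases Nat.eq_zero_or_pos (a L) with hL | hL
  · rw [Finset.sum_range_succ, hL, sum_range_two_pow_eq_two_mul hpos] at hk
    have IH := fun j (hj : j ≤ m) => ih (k / 2) (by omega) (hj.trans hm)
      ((ha.mono (Iio_subset_Iio L.le_succ)).tsub_one hpos) (by omega)
    rw [walshMoment_rec_of_eq IH, walshMomentFormula_odd hm L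
      (fun i hi => inv_two_pow_sub_one (hpos i hi)) (by simp [hL]), (by omega : k % 2 = 1)]
    ring
  · have hpos' : ∀ i < L + 1, 1 ≤ a i := fun i hi => by
      rcases Nat.lt_succ_iff_lt_or_eq.1 hi with hi | rfl
      exacts [hpos i hi, hL]
    rw [sum_range_two_pow_eq_two_mul hpos'] at hk
    have IH := fun j (hj : j ≤ m) =>
      ih (k / 2) (by omega) (hj.trans hm) (ha.tsub_one hpos') (by omega)
    rw [walshMoment_rec_of_eq IH, walshMomentFormula_even hm (L + 1)
      (fun i hi => inv_two_pow_sub_one (hpos' i hi)), (by omega : k % 2 = 0)]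
    ring

theorem stmt_10 (L : ℕ) (a : ℕ → ℕ) (ha : ∀ i j, i < j → j < L → a j < a i)
    (k : ℕ) (hk : k = ∑ i ∈ Finset.range L, 2 ^ a i) :
    ((∫ x in (0 : ℝ)..1, x * walsh k x) =
      if L = 0 then 1 / 2
      else if L = 1 then -(2 : ℝ) ^ (-(a 0 : ℤ) - 2)
      else 0) ∧
    ((∫ x in (0 : ℝ)..1, x ^ 2 * walsh k x) =
      if L = 0 then 1 / 3
      else if L = 1 then -(2 : ℝ) ^ (-(a 0 : ℤ) - 2)
      else if L = 2 then (2 : ℝ) ^ (-(a 0 : ℤ) - (a 1 : ℤ) - 3)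
      else 0) ∧
    ((∫ x in (0 : ℝ)..1, x ^ 3 * walsh k x) =
      if L = 0 then 1 / 4
      else if L = 1 then -(2 : ℝ) ^ (-(a 0 : ℤ) - 2) + (2 : ℝ) ^ (-3 * (a 0 : ℤ) - 5)
      else if L = 2 then 3 * (2 : ℝ) ^ (-(a 0 : ℤ) - (a 1 : ℤ) - 4)
      else if L = 3 then -3 * (2 : ℝ) ^ (-(a 0 : ℤ) - (a 1 : ℤ) - (a 2 : ℤ) - 5)
      else 0) := by
  have hanti : StrictAntiOn a (Iio L) := fun i _ j hj hij => ha i j hij hj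
  have h1 := walshMoment_eq_formula (m := 1) (by norm_num) k hanti hk
  have h2 := walshMoment_eq_formula (m := 2) (by norm_num) k hanti hk
  have h3 := walshMoment_eq_formula (m := 3) (by norm_num) k hanti hk
  simp only [walshMoment, pow_one] at h1 h2 h3
  rw [h1, h2, h3]
  refine ⟨?_, ?_, ?_⟩ <;> rcases L with _ | _ | _ | _ | L <;>
    simp [walshMomentFormula, zpow_sub₀, zpow_neg, zpow_mul, ← pow_mul] <;> ring
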